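/- arXiv:2507.13003 — 6 statements merged into one kernel-verified Lean document; each statement's English description precedes it below -/
import Mathlib

section
/- For all vectors u, v in R^d and all c > 0, one has ‖u+v‖³ ≤ (1+c)‖u‖³ + 3‖u‖⟨u,v⟩ + 2(1 + c^{-1/2})‖v‖³, where ‖·‖ is the Euclidean norm. -/
open RealInnerProductSpace

theorem cubed_norm_expansion_one (d : ℕ) (u v : EuclideanSpace ℝ (Fin d)) (c : ℝ) (hc : 0 < c) :
    ‖u + v‖ ^ 3 ≤ (1 + c) * ‖u‖ ^ 3 + 3 * ‖u‖ * ⟪u, v⟫ +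
      2 * (1 + c ^ (-(1 / 2) : ℝ)) * ‖v‖ ^ 3 := by
  set a := ‖u‖ with ha
  set b := ‖v‖ with hb
  set s := ‖u + v‖ with hsdef
  set t := ⟪u, v⟫ with htdef
  have ha0 : 0 ≤ a := norm_nonneg _
  have hb0 : 0 ≤ b := norm_nonneg _
  have hs0 : 0 ≤ s := norm_nonneg _
  have hsq : s ^ 2 = a ^ 2 + 2 * t + b ^ 2 := by
    rw [hsdef, ha, hb, htdef]
    exact norm_add_sq_real u v
  have h1 : s ≤ a + b := norm_add_le u v
  have h2 : a ≤ s + b := by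
    have := norm_sub_le (u + v) v
    simpa using this
  set k := Real.sqrt c with hk
  have hk0 : 0 < k := Real.sqrt_pos.mpr hc
  have hkc : k ^ 2 = c := Real.sq_sqrt hc.le
  have hpow : c ^ (-(1 / 2) : ℝ) = k⁻¹ := by
    rw [hk, Real.sqrt_eq_rpow, ← Real.rpow_neg hc.le]
  have hmain : s ^ 3 ≤ a ^ 3 + 3 * a * t + 3 * a * b ^ 2 + b ^ 3 := by
    nlinarith [mul_nonneg (mul_nonneg (by linarith : (0:ℝ) ≤ b - (s - a))
        (by linarith : (0:ℝ) ≤ b + (s - a))) (by linarith : (0:ℝ) ≤ 2 * s + a),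
      mul_nonneg (mul_nonneg hb0 hb0) (by linarith : (0:ℝ) ≤ a + b - s), hsq]
  have hAM : 3 * k * a * b ^ 2 ≤ k ^ 3 * a ^ 3 + 2 * b ^ 3 := by
    nlinarith [mul_nonneg (sq_nonneg (k * a - b)) (by positivity : (0:ℝ) ≤ k * a + 2 * b)]
  have hdiv : 3 * a * b ^ 2 ≤ k ^ 2 * a ^ 3 + 2 * k⁻¹ * b ^ 3 := by
    rw [← mul_le_mul_iff_right₀ hk0]
    have hr : k * (k ^ 2 * a ^ 3 + 2 * k⁻¹ * b ^ 3) = k ^ 3 * a ^ 3 + 2 * b ^ 3 := by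
      field_simp
    rw [hr]
    nlinarith [hAM]
  have hkc' : k ^ 2 * a ^ 3 = c * a ^ 3 := by rw [hkc]
  have hb3 : 0 ≤ b ^ 3 := pow_nonneg hb0 3
  have hki : 0 ≤ k⁻¹ := by positivity
  have hkib : 0 ≤ k⁻¹ * b ^ 3 := by positivity
  rw [hpow]
  nlinarith [hmain, hdiv, hkc', hb3, hkib]
end

section
/- For all vectors u, v in R^d and all c > 0, one has ‖u+v‖³ ≤ (1+2c)‖u‖³ + 2(1 + c^{-1/2} + 2c^{-2})‖v‖³, where ‖·‖ is the Euclidean norm. -/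
lemma cube_poly (a b s : ℝ) (ha : 0 ≤ a) (hb : 0 ≤ b) (hs : 0 < s) :
    s ^ 4 * (a + b) ^ 3 ≤ (1 + 2 * s ^ 2) * s ^ 4 * a ^ 3 + 2 * (s ^ 4 + s ^ 3 + 2) * b ^ 3 := by
  nlinarith [mul_nonneg (sq_nonneg (s ^ 2 * a - 2 * b)) (by positivity : (0:ℝ) ≤ s ^ 2 * a + b),
    mul_nonneg (mul_nonneg (pow_nonneg hs.le 3) (sq_nonneg (s * a - b)))
      (by positivity : (0:ℝ) ≤ s * a + 2 * b),
    mul_nonneg (pow_nonneg hs.le 4) (pow_nonneg hb 3)]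

theorem cubed_norm_expansion_two (d : ℕ) (u v : EuclideanSpace ℝ (Fin d)) (c : ℝ) (hc : 0 < c) :
    ‖u + v‖ ^ 3 ≤ (1 + 2 * c) * ‖u‖ ^ 3 +
      2 * (1 + c ^ (-(1 / 2) : ℝ) + 2 * c ^ (-(2 : ℝ))) * ‖v‖ ^ 3 := by
  set a := ‖u‖ with ha'
  set b := ‖v‖ with hb'
  have ha : 0 ≤ a := norm_nonneg u
  have hb : 0 ≤ b := norm_nonneg v
  have hs : (0:ℝ) < Real.sqrt c := Real.sqrt_pos.mpr hc
  have hsc : Real.sqrt c ^ 2 = c := Real.sq_sqrt hc.le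
  have hne : Real.sqrt c ≠ 0 := hs.ne'
  have h4 : (Real.sqrt c) ^ 4 = c ^ 2 := by
    rw [show (4:ℕ) = 2 * 2 from rfl, pow_mul, hsc]
  have e1 : c ^ (-(1 / 2) : ℝ) = (Real.sqrt c)⁻¹ := by
    rw [Real.rpow_neg hc.le, ← Real.sqrt_eq_rpow]
  have e2 : c ^ (-(2 : ℝ)) = ((Real.sqrt c) ^ 4)⁻¹ := by
    rw [h4, Real.rpow_neg hc.le, show ((2:ℝ)) = ((2:ℕ):ℝ) by norm_num, Real.rpow_natCast]
  rw [e1, e2]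
  have htri : ‖u + v‖ ^ 3 ≤ (a + b) ^ 3 :=
    pow_le_pow_left₀ (norm_nonneg _) (norm_add_le u v) 3
  refine htri.trans ?_
  have poly := cube_poly a b (Real.sqrt c) ha hb hs
  rw [hsc] at poly
  rw [← mul_le_mul_iff_right₀ (pow_pos hs 4)]
  have E : Real.sqrt c ^ 4 *
      ((1 + 2 * c) * a ^ 3 +
        2 * (1 + (Real.sqrt c)⁻¹ + 2 * (Real.sqrt c ^ 4)⁻¹) * b ^ 3) =
      (1 + 2 * c) * Real.sqrt c ^ 4 * a ^ 3 +
        2 * (Real.sqrt c ^ 4 + Real.sqrt c ^ 3 + 2) * b ^ 3 := by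
    field_simp
  rw [E]
  exact poly
end

section
/- The Hessian of the function φ(w) = ‖w‖³ on R^d is Lipschitz continuous with constant 9: for all w, w' in R^d, ‖∇²φ(w) − ∇²φ(w')‖ ≤ 9‖w − w'‖, where the matrix norm is the operator (spectral) norm. -/
open InnerProductSpace

variable {F : Type*} [NormedAddCommGroup F] [InnerProductSpace ℝ F]

lemma hasFDerivAt_norm' {x : F} (hx : x ≠ 0) :
    HasFDerivAt (fun y : F => ‖y‖) (‖x‖⁻¹ • innerSL ℝ x) x := by
  have h1 : HasFDerivAt (fun y : F => ‖y‖ ^ 2) (2 • innerSL ℝ x) x :=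
    (hasStrictFDerivAt_norm_sq x).hasFDerivAt
  have h2 : (‖x‖ : ℝ) ^ 2 ≠ 0 := pow_ne_zero _ (norm_ne_zero_iff.2 hx)
  have := (Real.hasDerivAt_sqrt h2).comp_hasFDerivAt x h1
  have heq : (fun y : F => Real.sqrt (‖y‖ ^ 2)) = fun y : F => ‖y‖ := by
    funext y; rw [Real.sqrt_sq (norm_nonneg y)]
  rw [show ((fun x => Real.sqrt x) ∘ fun y : F => ‖y‖ ^ 2) = fun y : F => ‖y‖ from heq ▸ rfl] at this
  convert this using 1
  · rfl
  · rfl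
  rw [Real.sqrt_sq (norm_nonneg x)]
  ext v
  simp
  ring

lemma hasFDerivAt_norm_cube (x : F) :
    HasFDerivAt (fun y : F => ‖y‖ ^ 3) ((3 * ‖x‖) • innerSL ℝ x) x := by
  rcases eq_or_ne x 0 with rfl | hx
  · rw [hasFDerivAt_iff_isLittleO_nhds_zero]
    simp only [norm_zero, mul_zero, zero_smul, ContinuousLinearMap.zero_apply, zero_add, sub_zero]
    rw [Asymptotics.isLittleO_iff]
    intro c hc
    filter_upwards [Metric.eventually_nhds_iff.2 ⟨Real.sqrt c, Real.sqrt_pos.2 hc,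
      fun {y} hy => hy⟩] with h hh
    simp only [dist_zero_right] at hh
    have h1 : ‖h‖ ^ 2 ≤ c := by
      nlinarith [Real.sq_sqrt hc.le, norm_nonneg h, hh.le]
    calc ‖‖h‖ ^ 3 - 0 ^ 3‖ = ‖‖h‖ ^ 3‖ := by norm_num
      _ = ‖h‖ ^ 2 * ‖h‖ := by
          rw [Real.norm_eq_abs, abs_of_nonneg (by positivity)]; ring
      _ ≤ c * ‖h‖ := by nlinarith [norm_nonneg h]
  · have h1 : HasFDerivAt (fun y : F => ‖y‖ ^ 2 * ‖y‖)
        ((‖x‖ ^ 2) • (‖x‖⁻¹ • innerSL ℝ x) + ‖x‖ • (2 • innerSL ℝ x)) x := by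
      have := ((hasStrictFDerivAt_norm_sq x).hasFDerivAt).mul (hasFDerivAt_norm' hx)
      exact this
    have heq : (fun y : F => ‖y‖ ^ 2 * ‖y‖) = fun y : F => ‖y‖ ^ 3 := by
      funext y; ring
    rw [heq] at h1
    convert h1 using 1
    ext v
    have : ‖x‖ ≠ 0 := norm_ne_zero_iff.2 hx
    simp
    field_simp
    ring

noncomputable def Hss (x : F) : F →L[ℝ] F :=
  (3 * ‖x‖) • ContinuousLinearMap.id ℝ F + (3 * ‖x‖⁻¹) • ((innerSL ℝ x).smulRight x)

lemma hasFDerivAt_grad (x : F) :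
    HasFDerivAt (fun y : F => (3 * ‖y‖) • y) (Hss x) x := by
  rcases eq_or_ne x 0 with rfl | hx
  · have h0 : Hss (0 : F) = 0 := by
      ext v; simp [Hss]
    rw [h0, hasFDerivAt_iff_isLittleO_nhds_zero]
    simp only [norm_zero, mul_zero, zero_smul, ContinuousLinearMap.zero_apply, zero_add, sub_zero]
    rw [Asymptotics.isLittleO_iff]
    intro c hc
    filter_upwards [Metric.eventually_nhds_iff.2 ⟨c / 3, by positivity,
      fun {y} hy => hy⟩] with h hh
    simp only [dist_zero_right] at hh
    calc ‖(3 * ‖h‖) • h‖ = 3 * ‖h‖ * ‖h‖ := by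
          rw [norm_smul, Real.norm_eq_abs, abs_of_nonneg (by positivity)]
      _ ≤ c * ‖h‖ := by nlinarith [norm_nonneg h]
  · have hn : ‖x‖ ≠ 0 := norm_ne_zero_iff.2 hx
    have hc : HasFDerivAt (fun y : F => 3 * ‖y‖) ((3 : ℝ) • (‖x‖⁻¹ • innerSL ℝ x)) x :=
      (hasFDerivAt_norm' hx).const_mul 3
    have := hc.smul (hasFDerivAt_id x)
    convert this using 1
    · rfl
    ext v
    simp [Hss, smul_smul]

lemma grad_eq [CompleteSpace F] :
    gradient (fun y : F => ‖y‖ ^ 3) = fun y : F => (3 * ‖y‖) • y := by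
  apply gradient_eq
  intro x
  rw [hasGradientAt_iff_hasFDerivAt]
  convert hasFDerivAt_norm_cube x using 1
  · rfl
  ext v
  simp [real_inner_smul_left]

lemma key_ineq {x y : F} (hx : x ≠ 0) (hy : y ≠ 0) :
    ‖x + y‖ * ‖‖x‖⁻¹ • x - ‖y‖⁻¹ • y‖ ≤ 2 * ‖x - y‖ := by
  have hr : (0:ℝ) < ‖x‖ := norm_pos_iff.2 hx
  have hr' : (0:ℝ) < ‖y‖ := norm_pos_iff.2 hy
  have hcs : |inner ℝ x y| ≤ ‖x‖ * ‖y‖ := abs_real_inner_le_norm x y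
  have hA : ‖x + y‖ ^ 2 = ‖x‖ ^ 2 + ‖y‖ ^ 2 + 2 * inner ℝ x y := by
    rw [@norm_add_sq_real]; ring
  have hC : ‖x - y‖ ^ 2 = ‖x‖ ^ 2 + ‖y‖ ^ 2 - 2 * inner ℝ x y := by
    rw [@norm_sub_sq_real]; ring
  have hB : ‖‖x‖⁻¹ • x - ‖y‖⁻¹ • y‖ ^ 2 = 2 - 2 * (inner ℝ x y / (‖x‖ * ‖y‖)) := by
    rw [@norm_sub_sq_real]
    rw [norm_smul, norm_smul, real_inner_smul_left, real_inner_smul_right]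
    simp [abs_of_nonneg (inv_nonneg.2 hr.le), abs_of_nonneg (inv_nonneg.2 hr'.le)]
    field_simp
    ring
  apply le_of_pow_le_pow_left₀ (n := 2) two_ne_zero (by positivity)
  rw [mul_pow, hA, hB, mul_pow]
  rw [show (2:ℝ)^2 * ‖x - y‖^2 = 4 * (‖x‖^2 + ‖y‖^2 - 2 * inner ℝ x y) by rw [hC]; ring]
  rw [abs_le] at hcs
  have h1 : (0:ℝ) < ‖x‖ * ‖y‖ := by positivity
  have h2 : (2 - 2 * (inner ℝ x y / (‖x‖ * ‖y‖)) : ℝ)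
      = (2 * (‖x‖ * ‖y‖) - 2 * inner ℝ x y) / (‖x‖ * ‖y‖) := by field_simp
  rw [h2, mul_div_assoc', div_le_iff₀ h1]
  nlinarith [sq_nonneg (‖x‖ - ‖y‖), sq_nonneg (‖x‖ * ‖y‖ - inner ℝ x y),
    mul_nonneg (by nlinarith : (0:ℝ) ≤ ‖x‖ * ‖y‖ + inner ℝ x y)
      (by nlinarith [sq_nonneg (‖x‖ - ‖y‖)] : (0:ℝ) ≤ ‖x‖^2 + ‖y‖^2 - 2 * (‖x‖ * ‖y‖)),
    mul_pos hr hr']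

lemma Hss_apply (z v : F) : Hss z v = (3 * ‖z‖) • v + (3 * ‖z‖⁻¹ * inner ℝ z v) • z := by
  simp [Hss, smul_smul]

lemma rank_one_bound (z v : F) : ‖(3 * ‖z‖⁻¹ * inner ℝ z v) • z‖ ≤ 3 * ‖z‖ * ‖v‖ := by
  rcases eq_or_ne z 0 with rfl | hz
  · simp
  · have hz' : (0:ℝ) < ‖z‖ := norm_pos_iff.2 hz
    rw [norm_smul, Real.norm_eq_abs, abs_mul, abs_mul]
    have h1 : |inner ℝ z v| ≤ ‖z‖ * ‖v‖ := abs_real_inner_le_norm z v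
    have h2 : |(‖z‖⁻¹ : ℝ)| = ‖z‖⁻¹ := abs_of_nonneg (by positivity)
    rw [h2, abs_of_nonneg (by norm_num : (0:ℝ) ≤ 3)]
    calc 3 * ‖z‖⁻¹ * |inner ℝ z v| * ‖z‖ ≤ 3 * ‖z‖⁻¹ * (‖z‖ * ‖v‖) * ‖z‖ := by
          gcongr
      _ = 3 * ‖z‖ * ‖v‖ := by field_simp

lemma Hss_lip (x y : F) : ‖Hss x - Hss y‖ ≤ 9 * ‖x - y‖ := by
  apply ContinuousLinearMap.opNorm_le_bound _ (by positivity)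
  intro v
  rw [ContinuousLinearMap.sub_apply, Hss_apply, Hss_apply]
  have hsplit : (3 * ‖x‖) • v + (3 * ‖x‖⁻¹ * inner ℝ x v) • x -
      ((3 * ‖y‖) • v + (3 * ‖y‖⁻¹ * inner ℝ y v) • y) =
      ((3 * ‖x‖ - 3 * ‖y‖) • v) +
      ((3 * ‖x‖⁻¹ * inner ℝ x v) • x - (3 * ‖y‖⁻¹ * inner ℝ y v) • y) := by
    module
  rw [hsplit]
  have h1 : ‖(3 * ‖x‖ - 3 * ‖y‖) • v‖ ≤ 3 * ‖x - y‖ * ‖v‖ := by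
    rw [norm_smul, Real.norm_eq_abs]
    have := abs_norm_sub_norm_le x y
    have h3 : |3 * ‖x‖ - 3 * ‖y‖| = 3 * |‖x‖ - ‖y‖| := by
      rw [show 3 * ‖x‖ - 3 * ‖y‖ = 3 * (‖x‖ - ‖y‖) by ring, abs_mul,
        abs_of_nonneg (by norm_num : (0:ℝ) ≤ 3)]
    rw [h3]
    nlinarith [norm_nonneg v, abs_nonneg (‖x‖ - ‖y‖)]
  have h2 : ‖(3 * ‖x‖⁻¹ * inner ℝ x v) • x - (3 * ‖y‖⁻¹ * inner ℝ y v) • y‖ ≤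
      6 * ‖x - y‖ * ‖v‖ := by
    rcases eq_or_ne x 0 with rfl | hx
    · simp only [norm_zero, inner_zero_left, mul_zero, zero_smul, zero_sub, norm_neg]
      calc ‖(3 * ‖y‖⁻¹ * inner ℝ y v) • y‖ ≤ 3 * ‖y‖ * ‖v‖ := rank_one_bound y v
        _ ≤ 6 * ‖y‖ * ‖v‖ := by nlinarith [norm_nonneg y, norm_nonneg v]
    rcases eq_or_ne y 0 with rfl | hy
    · simp only [norm_zero, inner_zero_left, mul_zero, zero_smul, sub_zero]
      calc ‖(3 * ‖x‖⁻¹ * inner ℝ x v) • x‖ ≤ 3 * ‖x‖ * ‖v‖ := rank_one_bound x v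
        _ ≤ 6 * ‖x‖ * ‖v‖ := by nlinarith [norm_nonneg x, norm_nonneg v]
    · have hid : (3 * ‖x‖⁻¹ * inner ℝ x v) • x - (3 * ‖y‖⁻¹ * inner ℝ y v) • y =
          (3 * ((inner ℝ (x - y) v : ℝ) / 2)) • (‖x‖⁻¹ • x + ‖y‖⁻¹ • y) +
          (3 * ((inner ℝ (x + y) v : ℝ) / 2)) • (‖x‖⁻¹ • x - ‖y‖⁻¹ • y) := by
        rw [inner_sub_left, inner_add_left]
        module
      rw [hid]
      have hux : ‖(‖x‖⁻¹ • x : F)‖ = 1 := by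
        rw [norm_smul, Real.norm_eq_abs, abs_of_nonneg (by positivity), inv_mul_cancel₀
          (norm_ne_zero_iff.2 hx)]
      have huy : ‖(‖y‖⁻¹ • y : F)‖ = 1 := by
        rw [norm_smul, Real.norm_eq_abs, abs_of_nonneg (by positivity), inv_mul_cancel₀
          (norm_ne_zero_iff.2 hy)]
      have husum : ‖(‖x‖⁻¹ • x + ‖y‖⁻¹ • y : F)‖ ≤ 2 := by
        calc ‖(‖x‖⁻¹ • x + ‖y‖⁻¹ • y : F)‖ ≤ _ := norm_add_le _ _
          _ ≤ 2 := by rw [hux, huy]; norm_num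
      have hkey := key_ineq hx hy
      have hA : ‖(3 * ((inner ℝ (x - y) v : ℝ) / 2)) • (‖x‖⁻¹ • x + ‖y‖⁻¹ • y)‖ ≤
          3 * ‖x - y‖ * ‖v‖ := by
        rw [norm_smul, Real.norm_eq_abs, abs_mul, abs_of_nonneg (by norm_num : (0:ℝ) ≤ 3),
          abs_div, abs_of_nonneg (by norm_num : (0:ℝ) ≤ 2)]
        have hi : |(inner ℝ (x - y) v : ℝ)| ≤ ‖x - y‖ * ‖v‖ := abs_real_inner_le_norm _ _
        have := norm_nonneg (‖x‖⁻¹ • x + ‖y‖⁻¹ • y : F)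
        nlinarith [abs_nonneg (inner ℝ (x - y) v : ℝ), norm_nonneg (x - y), norm_nonneg v]
      have hB : ‖(3 * ((inner ℝ (x + y) v : ℝ) / 2)) • (‖x‖⁻¹ • x - ‖y‖⁻¹ • y)‖ ≤
          3 * ‖x - y‖ * ‖v‖ := by
        rw [norm_smul, Real.norm_eq_abs, abs_mul, abs_of_nonneg (by norm_num : (0:ℝ) ≤ 3),
          abs_div, abs_of_nonneg (by norm_num : (0:ℝ) ≤ 2)]
        have hi : |(inner ℝ (x + y) v : ℝ)| ≤ ‖x + y‖ * ‖v‖ := abs_real_inner_le_norm _ _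
        have h0 := norm_nonneg (‖x‖⁻¹ • x - ‖y‖⁻¹ • y : F)
        nlinarith [abs_nonneg (inner ℝ (x + y) v : ℝ), norm_nonneg (x + y), norm_nonneg v,
          norm_nonneg (x - y), mul_le_mul_of_nonneg_left hkey (by norm_num : (0:ℝ) ≤ 3),
          mul_nonneg (norm_nonneg (x+y)) (norm_nonneg v)]
      calc ‖_ + _‖ ≤ _ := norm_add_le _ _
        _ ≤ 3 * ‖x - y‖ * ‖v‖ + 3 * ‖x - y‖ * ‖v‖ := add_le_add hA hB
        _ = 6 * ‖x - y‖ * ‖v‖ := by ring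
  calc ‖_ + _‖ ≤ _ := norm_add_le _ _
    _ ≤ 3 * ‖x - y‖ * ‖v‖ + 6 * ‖x - y‖ * ‖v‖ := add_le_add h1 h2
    _ = 9 * ‖x - y‖ * ‖v‖ := by ring

theorem cubed_norm_hessian_lipschitz (d : ℕ) (w w' : EuclideanSpace ℝ (Fin d)) :
    ‖fderiv ℝ (gradient (fun w : EuclideanSpace ℝ (Fin d) => ‖w‖ ^ 3)) w -
      fderiv ℝ (gradient (fun w : EuclideanSpace ℝ (Fin d) => ‖w‖ ^ 3)) w'‖ ≤
      9 * ‖w - w'‖ := by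
  have hg : gradient (fun w : EuclideanSpace ℝ (Fin d) => ‖w‖ ^ 3) =
      fun y : EuclideanSpace ℝ (Fin d) => (3 * ‖y‖) • y := grad_eq
  rw [hg, (hasFDerivAt_grad w).fderiv, (hasFDerivAt_grad w').fderiv]
  exact Hss_lip w w'
end

section
/- For all u, v in R^d, one has ‖u+v‖³ ≤ ‖u‖³ + 3‖u‖⟨u,v⟩ + 3‖u‖‖v‖² + 2‖v‖³. -/
/-!
Write `a = ‖u‖`, `b = ‖v‖`, `c = ‖u + v‖`. Eliminating `⟪u, v⟫ = (c² - a² - b²) / 2` turns the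
claim into `2c³ - 3ac² + a³ ≤ 3ab² + 4b³`. The left side factors as `(c - a)² (2c + a)`, and the
reverse triangle inequality `|c - a| ≤ b` bounds it by `b² (3a + 2b)`.
-/

open RealInnerProductSpace

theorem two_mul_cube_sub_le {a b c : ℝ} (ha : 0 ≤ a) (hc : 0 ≤ c) (h : |c - a| ≤ b) :
    2 * c ^ 3 - 3 * a * c ^ 2 + a ^ 3 ≤ b ^ 2 * (3 * a + 2 * b) := by
  have hsq : (c - a) ^ 2 ≤ b ^ 2 := sq_le_sq' (abs_le.mp h).1 (abs_le.mp h).2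
  have hlin : 2 * c + a ≤ 3 * a + 2 * b := by linarith [(abs_le.mp h).2]
  calc 2 * c ^ 3 - 3 * a * c ^ 2 + a ^ 3 = (c - a) ^ 2 * (2 * c + a) := by ring
    _ ≤ b ^ 2 * (3 * a + 2 * b) := mul_le_mul hsq hlin (by positivity) (sq_nonneg b)

theorem norm_add_pow_three_le {E : Type*} [NormedAddCommGroup E] [InnerProductSpace ℝ E]
    (u v : E) :
    ‖u + v‖ ^ 3 ≤ ‖u‖ ^ 3 + 3 * ‖u‖ * ⟪u, v⟫ + 3 * ‖u‖ * ‖v‖ ^ 2 + 2 * ‖v‖ ^ 3 := by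
  have hinner : 2 * ⟪u, v⟫ = ‖u + v‖ ^ 2 - ‖u‖ ^ 2 - ‖v‖ ^ 2 := by
    rw [norm_add_sq_real]; ring
  have hdist : |‖u + v‖ - ‖u‖| ≤ ‖v‖ := by
    simpa using abs_norm_sub_norm_le (u + v) u
  have key := two_mul_cube_sub_le (norm_nonneg u) (norm_nonneg (u + v)) hdist
  linear_combination (key - 3 * ‖u‖ * hinner + 2 * pow_nonneg (norm_nonneg v) 3) / 2

theorem cubed_norm_taylor_bound (d : ℕ) (u v : EuclideanSpace ℝ (Fin d)) :
    ‖u + v‖ ^ 3 ≤ ‖u‖ ^ 3 + 3 * ‖u‖ * ⟪u, v⟫ + 3 * ‖u‖ * ‖v‖ ^ 2 + 2 * ‖v‖ ^ 3 :=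
  norm_add_pow_three_le u v
end

section
/- Let f : R^n → R be C² with L-Lipschitz Hessian (operator norm), and let η ∈ (0, 1/(2L)). Let x ∈ R^n, g ∈ R^n, M a symmetric n×n matrix, and let x⁺ be a global minimizer of x' ↦ ⟨g, x'−x⟩ + (1/2)⟨x'−x, M(x'−x)⟩ + (1/(6η))‖x'−x‖³. Then ‖∇f(x⁺)‖ ≤ (5/(4η))‖x⁺−x‖² + (η/2)‖M − ∇²f(x)‖² + ‖g − ∇f(x)‖, where the matrix norm is the operator norm. -/
open RealInnerProductSpace
open intervalIntegral

set_option maxHeartbeats 1000000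
set_option synthInstance.maxHeartbeats 400000

lemma taylor_half {E : Type*} [NormedAddCommGroup E] [NormedSpace ℝ E] [CompleteSpace E]
    (G : E → E) (hG : ContDiff ℝ 1 G) (L : ℝ) (hL0 : 0 ≤ L)
    (hLip : ∀ x y, ‖fderiv ℝ G y - fderiv ℝ G x‖ ≤ L * ‖y - x‖) (x y : E) :
    ‖G y - G x - fderiv ℝ G x (y - x)‖ ≤ L / 2 * ‖y - x‖ ^ 2 := by
  set s : E := y - x with hs
  have hGd : ∀ z, DifferentiableAt ℝ G z := fun z => hG.differentiable (by norm_num) z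
  have hline : ∀ t : ℝ, HasDerivAt (fun t : ℝ => G (x + t • s))
      ((fderiv ℝ G (x + t • s)) s) t := by
    intro t
    have h1 : HasDerivAt (fun t : ℝ => x + t • s) s t := by
      simpa using ((hasDerivAt_id t).smul_const s).const_add x
    exact (hGd _).hasFDerivAt.comp_hasDerivAt t h1
  have hcont : Continuous fun t : ℝ => (fderiv ℝ G (x + t • s)) s := by
    have hc : Continuous (fderiv ℝ G) := hG.continuous_fderiv (by norm_num)
    exact (hc.comp (by continuity)).clm_apply continuous_const
  have hint : IntervalIntegrable (fun t : ℝ => (fderiv ℝ G (x + t • s)) s)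
      MeasureTheory.volume 0 1 := hcont.intervalIntegrable 0 1
  have heq : ∫ t in (0:ℝ)..1, (fderiv ℝ G (x + t • s)) s = G y - G x := by
    have := integral_eq_sub_of_hasDerivAt (f := fun t : ℝ => G (x + t • s))
      (fun t _ => hline t) hint
    simpa [hs] using this
  have heq2 : G y - G x - fderiv ℝ G x s
      = ∫ t in (0:ℝ)..1, ((fderiv ℝ G (x + t • s)) s - (fderiv ℝ G x) s) := by
    rw [integral_sub hint (intervalIntegrable_const), heq]
    simp
  rw [heq2]
  have hb : ∀ t ∈ Set.Ioc (0:ℝ) 1,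
      ‖(fderiv ℝ G (x + t • s)) s - (fderiv ℝ G x) s‖ ≤ L * t * ‖s‖ ^ 2 := by
    intro t ht
    have h1 : ‖(fderiv ℝ G (x + t • s)) s - (fderiv ℝ G x) s‖
        ≤ ‖fderiv ℝ G (x + t • s) - fderiv ℝ G x‖ * ‖s‖ := by
      simpa using (fderiv ℝ G (x + t • s) - fderiv ℝ G x).le_opNorm s
    have h2 : ‖fderiv ℝ G (x + t • s) - fderiv ℝ G x‖ ≤ L * (t * ‖s‖) := by
      have := hLip x (x + t • s)
      simpa [norm_smul, abs_of_pos ht.1, mul_assoc] using this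
    calc ‖(fderiv ℝ G (x + t • s)) s - (fderiv ℝ G x) s‖
        ≤ (L * (t * ‖s‖)) * ‖s‖ := h1.trans (by
          exact mul_le_mul_of_nonneg_right h2 (norm_nonneg _))
      _ = L * t * ‖s‖ ^ 2 := by ring
  have hae : ∀ᵐ t ∂(MeasureTheory.volume.restrict (Set.uIoc (0:ℝ) 1)),
      ‖(fderiv ℝ G (x + t • s)) s - (fderiv ℝ G x) s‖ ≤ L * t * ‖s‖ ^ 2 := by
    rw [Set.uIoc_of_le (by norm_num : (0:ℝ) ≤ 1)]
    exact (MeasureTheory.ae_restrict_iff' measurableSet_Ioc).2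
      (Filter.Eventually.of_forall hb)
  have hnorm : ‖∫ t in (0:ℝ)..1, ((fderiv ℝ G (x + t • s)) s - (fderiv ℝ G x) s)‖
      ≤ |∫ t in (0:ℝ)..1, L * t * ‖s‖ ^ 2| :=
    norm_integral_le_abs_of_norm_le hae
      ((by fun_prop : Continuous fun t : ℝ => L * t * ‖s‖ ^ 2).intervalIntegrable 0 1)
  have hval : ∫ t in (0:ℝ)..1, L * t * ‖s‖ ^ 2 = L / 2 * ‖s‖ ^ 2 := by
    have : ∀ t : ℝ, L * t * ‖s‖ ^ 2 = (L * ‖s‖ ^ 2) * t := by intro t; ring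
    simp only [this]
    rw [integral_const_mul, integral_id]
    ring
  calc _ ≤ _ := hnorm
    _ = L / 2 * ‖s‖ ^ 2 := by
      rw [hval, abs_of_nonneg]
      positivity


lemma foc {E : Type*} [NormedAddCommGroup E] [InnerProductSpace ℝ E]
    (η : ℝ) (hη : 0 < η) (x g xp : E) (M : E →L[ℝ] E)
    (hM : ∀ u v : E, ⟪M u, v⟫ = ⟪u, M v⟫)
    (hmin : ∀ x' : E,
      ⟪g, xp - x⟫ + 1 / 2 * ⟪xp - x, M (xp - x)⟫ + 1 / (6 * η) * ‖xp - x‖ ^ 3 ≤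
      ⟪g, x' - x⟫ + 1 / 2 * ⟪x' - x, M (x' - x)⟫ + 1 / (6 * η) * ‖x' - x‖ ^ 3) :
    g + M (xp - x) + ((1 / (2 * η)) * ‖xp - x‖) • (xp - x) = 0 := by
  have hu : HasFDerivAt (fun x' : E => x' - x) (ContinuousLinearMap.id ℝ E) xp :=
    (hasFDerivAt_id xp).sub_const x
  have T1 := (hasFDerivAt_const g xp).inner ℝ hu
  have hMu : HasFDerivAt (fun x' : E => M (x' - x))
      (M.comp (ContinuousLinearMap.id ℝ E)) xp := M.hasFDerivAt.comp xp hu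
  have T2 := (hu.inner ℝ hMu).const_mul (1/2 : ℝ)
  have Tq := hu.inner ℝ hu
  have Trpow := (Real.hasDerivAt_rpow_const
    (x := ⟪xp - x, xp - x⟫) (p := (3:ℝ)/2) (Or.inr (by norm_num))).comp_hasFDerivAt xp Tq
  have T3 := Trpow.const_mul (1/(6*η) : ℝ)
  have hφ := (T1.add T2).add T3
  have hkey : ∀ u : E, (⟪u, u⟫ : ℝ) ^ ((3:ℝ)/2) = ‖u‖ ^ 3 := by
    intro u
    rw [real_inner_self_eq_norm_sq, ← Real.rpow_natCast ‖u‖ 2,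
      ← Real.rpow_mul (norm_nonneg u)]
    norm_num
  have hfeq : (fun x' : E => ⟪g, x' - x⟫ + 1/2 * ⟪x' - x, M (x' - x)⟫
        + 1/(6*η) * (⟪x' - x, x' - x⟫ : ℝ) ^ ((3:ℝ)/2))
      = fun x' : E => ⟪g, x' - x⟫ + 1/2 * ⟪x' - x, M (x' - x)⟫
        + 1/(6*η) * ‖x' - x‖ ^ 3 := funext fun x' => by rw [hkey]
  simp only [Function.comp_def, Pi.add_def] at hφ
  rw [hfeq] at hφ
  have hlm : IsLocalMin (fun x' : E => ⟪g, x' - x⟫ + 1/2 * ⟪x' - x, M (x' - x)⟫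
      + 1/(6*η) * ‖x' - x‖ ^ 3) xp := Filter.Eventually.of_forall hmin
  have hD0 := hlm.hasFDerivAt_eq_zero hφ
  have hfoc : ∀ v : E, ⟪g + M (xp - x) + ((1 / (2 * η)) * ‖xp - x‖) • (xp - x), v⟫ = 0 := by
    intro v
    have h := congrFun (congrArg DFunLike.coe hD0) v
    simp [fderivInnerCLM_apply] at h
    rw [← map_sub] at h
    have h12 : (⟪xp - x, xp - x⟫ : ℝ) ^ ((3:ℝ)/2 - 1) = ‖xp - x‖ := by
      rw [real_inner_self_eq_norm_sq, ← Real.rpow_natCast ‖xp - x‖ 2,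
        ← Real.rpow_mul (norm_nonneg _)]
      norm_num
    rw [← real_inner_self_eq_norm_sq] at h
    rw [h12, ← hM (xp - x) v, real_inner_comm v (M (xp - x)),
      real_inner_comm v (xp - x)] at h
    simp only [inner_add_left, real_inner_smul_left]
    rw [real_inner_comm v (M (xp - x)), real_inner_comm v (xp - x)]
    linear_combination h
  have := hfoc (g + M (xp - x) + ((1 / (2 * η)) * ‖xp - x‖) • (xp - x))
  exact inner_self_eq_zero.mp this


theorem inexact_crn_grad_bound (n : ℕ) (f : EuclideanSpace ℝ (Fin n) → ℝ) (L : ℝ) (hL : 0 < L)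
    (hf : ContDiff ℝ 2 f)
    (hLip : ∀ x y : EuclideanSpace ℝ (Fin n),
      ‖fderiv ℝ (gradient f) y - fderiv ℝ (gradient f) x‖ ≤ L * ‖y - x‖)
    (η : ℝ) (hη : 0 < η) (hηL : η < 1 / (2 * L))
    (x g xp : EuclideanSpace ℝ (Fin n))
    (M : EuclideanSpace ℝ (Fin n) →L[ℝ] EuclideanSpace ℝ (Fin n))
    (hM : ∀ u v : EuclideanSpace ℝ (Fin n), ⟪M u, v⟫ = ⟪u, M v⟫)
    (hmin : ∀ x' : EuclideanSpace ℝ (Fin n),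
      ⟪g, xp - x⟫ + 1 / 2 * ⟪xp - x, M (xp - x)⟫ + 1 / (6 * η) * ‖xp - x‖ ^ 3 ≤
      ⟪g, x' - x⟫ + 1 / 2 * ⟪x' - x, M (x' - x)⟫ + 1 / (6 * η) * ‖x' - x‖ ^ 3) :
    ‖gradient f xp‖ ≤ 5 / (4 * η) * ‖xp - x‖ ^ 2 +
      η / 2 * ‖M - fderiv ℝ (gradient f) x‖ ^ 2 + ‖g - gradient f x‖ := by
  have hG1 : ContDiff ℝ 1 (gradient f) := by
    have h : ContDiff ℝ 1 (fderiv ℝ f) := hf.fderiv_right (by norm_num)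
    exact ((InnerProductSpace.toDual ℝ _).symm.contDiff).comp h
  set H : EuclideanSpace ℝ (Fin n) →L[ℝ] EuclideanSpace ℝ (Fin n) :=
    fderiv ℝ (gradient f) x with hH
  have hT : ‖gradient f xp - gradient f x - H (xp - x)‖ ≤ L / 2 * ‖xp - x‖ ^ 2 :=
    taylor_half (gradient f) hG1 L hL.le hLip x xp
  have hFOC : g + M (xp - x) + ((1 / (2 * η)) * ‖xp - x‖) • (xp - x) = 0 :=
    foc η hη x g xp M hM hmin
  have hdecomp : gradient f xp =
      (gradient f xp - gradient f x - H (xp - x)) - (M (xp - x) - H (xp - x))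
        - ((1 / (2 * η)) * ‖xp - x‖) • (xp - x) - (g - gradient f x) := by
    have h2 : gradient f xp - ((gradient f xp - gradient f x - H (xp - x))
        - (M (xp - x) - H (xp - x)) - ((1 / (2 * η)) * ‖xp - x‖) • (xp - x)
        - (g - gradient f x))
        = g + M (xp - x) + ((1 / (2 * η)) * ‖xp - x‖) • (xp - x) := by abel
    rw [hFOC] at h2
    exact sub_eq_zero.mp h2
  have hMH : ‖M (xp - x) - H (xp - x)‖ ≤ ‖M - H‖ * ‖xp - x‖ := by
    simpa using (M - H).le_opNorm (xp - x)
  have hcs : ‖((1 / (2 * η)) * ‖xp - x‖) • (xp - x)‖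
      = 1 / (2 * η) * ‖xp - x‖ ^ 2 := by
    rw [norm_smul, Real.norm_eq_abs, abs_of_nonneg (by positivity)]
    ring
  have hb : ‖gradient f xp‖ ≤ L / 2 * ‖xp - x‖ ^ 2 + ‖M - H‖ * ‖xp - x‖
      + 1 / (2 * η) * ‖xp - x‖ ^ 2 + ‖g - gradient f x‖ := by
    rw [hdecomp]
    refine le_trans (norm_sub_le _ _) (add_le_add ?_ le_rfl)
    refine le_trans (norm_sub_le _ _) (add_le_add ?_ hcs.le)
    exact le_trans (norm_sub_le _ _) (add_le_add hT hMH)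
  have h2Lη : η * (2 * L) < 1 := (lt_div_iff₀ (by positivity)).mp hηL
  have hA : ‖M - H‖ * ‖xp - x‖ ≤ η / 2 * ‖M - H‖ ^ 2 + 1 / (2 * η) * ‖xp - x‖ ^ 2 := by
    rw [← sub_nonneg]
    have hsq := sq_nonneg (η * ‖M - H‖ - ‖xp - x‖)
    have hη' : η ≠ 0 := ne_of_gt hη
    field_simp
    nlinarith [sq_nonneg (η * ‖M - H‖ - ‖xp - x‖)]
  have hL2 : L / 2 * ‖xp - x‖ ^ 2 ≤ 1 / (4 * η) * ‖xp - x‖ ^ 2 := by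
    apply mul_le_mul_of_nonneg_right _ (sq_nonneg _)
    rw [div_le_div_iff₀ (by norm_num) (by positivity)]
    nlinarith
  calc ‖gradient f xp‖ ≤ _ := hb
    _ ≤ 1 / (4 * η) * ‖xp - x‖ ^ 2
        + (η / 2 * ‖M - H‖ ^ 2 + 1 / (2 * η) * ‖xp - x‖ ^ 2)
        + 1 / (2 * η) * ‖xp - x‖ ^ 2 + ‖g - gradient f x‖ := by
      linarith [hA, hL2]
    _ = 5 / (4 * η) * ‖xp - x‖ ^ 2 + η / 2 * ‖M - H‖ ^ 2 + ‖g - gradient f x‖ := by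
      field_simp
      ring
end

section
/- Let f : R^n → R be C² with L-Lipschitz Hessian (operator norm), η ∈ (0, 1/(2L)), and let x⁺ be a global minimizer of x' ↦ ⟨g, x'−x⟩ + (1/2)⟨x'−x, M(x'−x)⟩ + (1/(6η))‖x'−x‖³ for given x, g, symmetric M. Then f(x⁺) ≤ f(x) − (1/(9η))‖x⁺−x‖³ + 24η²‖∇²f(x) − M‖_F³ + 3η^{1/2}‖∇f(x) − g‖^{3/2}. -/
open RealInnerProductSpace

/-- The Frobenius norm of a linear operator on `EuclideanSpace ℝ (Fin n)`. -/
noncomputable def frobNorm {n : ℕ}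
    (T : EuclideanSpace ℝ (Fin n) →L[ℝ] EuclideanSpace ℝ (Fin n)) : ℝ :=
  Real.sqrt (∑ i, ∑ j, (T (EuclideanSpace.single j 1) i) ^ 2)

/-! ### Auxiliary lemmas -/

private lemma young1 (d r η : ℝ) (hd : 0 ≤ d) (hr : 0 ≤ r) (hη : 0 < η) :
    d * r ≤ 1 / (36 * η) * r ^ 3 + 3 * η ^ ((1:ℝ)/2) * d ^ ((3:ℝ)/2) := by
  have hS : η ^ ((1:ℝ)/2) = Real.sqrt η := (Real.sqrt_eq_rpow η).symm
  have hD : d ^ ((3:ℝ)/2) = Real.sqrt d ^ 3 := by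
    rw [Real.sqrt_eq_rpow, ← Real.rpow_natCast (d ^ ((1:ℝ)/2)) 3, ← Real.rpow_mul hd]
    norm_num
  rw [hS, hD]
  set S := Real.sqrt η with hSdef
  set D := Real.sqrt d with hDdef
  have hS0 : 0 < S := Real.sqrt_pos.mpr hη
  have hD0 : 0 ≤ D := Real.sqrt_nonneg d
  have hd' : d = D ^ 2 := (Real.sq_sqrt hd).symm
  have hη' : η = S ^ 2 := (Real.sq_sqrt hη.le).symm
  rw [hd', hη']
  have h36 : (0:ℝ) < 36 * S ^ 2 := by positivity
  have key : D ^ 2 * r ≤ (r ^ 3 + 108 * S ^ 3 * D ^ 3) / (36 * S ^ 2) := by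
    rw [le_div_iff₀ h36]
    nlinarith [mul_nonneg (mul_nonneg hS0.le hD0) (sq_nonneg (r - 3 * (S * D))),
      mul_nonneg hr (sq_nonneg (r - 6 * (S * D)))]
  refine key.trans (le_of_eq ?_)
  field_simp
  ring

private lemma young2 (e r η : ℝ) (he : 0 ≤ e) (hr : 0 ≤ r) (hη : 0 < η) :
    1 / 2 * (e * r ^ 2) ≤ 1 / (36 * η) * r ^ 3 + 24 * η ^ 2 * e ^ 3 := by
  have h36 : (0:ℝ) < 36 * η := by positivity
  have key : 1 / 2 * (e * r ^ 2) ≤ (r ^ 3 + 864 * η ^ 3 * e ^ 3) / (36 * η) := by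
    rw [le_div_iff₀ h36]
    nlinarith [mul_nonneg (sq_nonneg (r - 12 * (η * e))) hr,
      mul_nonneg (sq_nonneg (r - 12 * (η * e))) (mul_nonneg hη.le he)]
  refine key.trans (le_of_eq ?_)
  field_simp
  ring

private lemma frob_bound {n : ℕ} (T : EuclideanSpace ℝ (Fin n) →L[ℝ] EuclideanSpace ℝ (Fin n))
    (v : EuclideanSpace ℝ (Fin n)) : ‖T v‖ ≤ frobNorm T * ‖v‖ := by
  have hF0 : 0 ≤ frobNorm T := Real.sqrt_nonneg _
  have hv : v = ∑ j, v j • EuclideanSpace.single j (1:ℝ) := by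
    ext i
    rw [WithLp.ofLp_sum, Finset.sum_apply i Finset.univ _]
    simp [EuclideanSpace.single_apply]
  have hTv : ∀ i, T v i = ∑ j, v j * T (EuclideanSpace.single j 1) i := by
    intro i
    conv_lhs => rw [hv]
    rw [map_sum, WithLp.ofLp_sum, Finset.sum_apply i Finset.univ _]
    simp
  have hsq : ‖T v‖ ^ 2 ≤ frobNorm T ^ 2 * ‖v‖ ^ 2 := by
    have hnorm : ‖T v‖ ^ 2 = ∑ i, (T v i) ^ 2 := by
      rw [EuclideanSpace.norm_eq, Real.sq_sqrt (by positivity)]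
      simp [sq_abs]
    have hnv : ‖v‖ ^ 2 = ∑ j, (v j) ^ 2 := by
      rw [EuclideanSpace.norm_eq, Real.sq_sqrt (by positivity)]
      simp [sq_abs]
    have hF : frobNorm T ^ 2 = ∑ i, ∑ j, (T (EuclideanSpace.single j 1) i) ^ 2 := by
      rw [frobNorm, Real.sq_sqrt (by positivity)]
    rw [hnorm, hnv, hF, Finset.sum_mul]
    apply Finset.sum_le_sum
    intro i _
    set w : EuclideanSpace ℝ (Fin n) := WithLp.toLp 2 fun j => T (EuclideanSpace.single j 1) i with hw
    have h1 : T v i = ⟪v, w⟫ := by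
      rw [hTv i, PiLp.inner_apply]
      simp [hw]
      exact Finset.sum_congr rfl fun _ _ => mul_comm _ _
    have h2 : ⟪v, w⟫ * ⟪v, w⟫ ≤ ⟪v, v⟫ * ⟪w, w⟫ := real_inner_mul_inner_self_le v w
    have h3 : ⟪v, v⟫ = ∑ j, (v j) ^ 2 := by rw [PiLp.inner_apply]; simp [sq]
    have h4 : ⟪w, w⟫ = ∑ j, (T (EuclideanSpace.single j 1) i) ^ 2 := by
      rw [PiLp.inner_apply]; simp [hw, sq]
    rw [h1, sq]
    calc ⟪v, w⟫ * ⟪v, w⟫ ≤ ⟪v, v⟫ * ⟪w, w⟫ := h2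
      _ = (∑ j, (T (EuclideanSpace.single j 1) i) ^ 2) * ∑ j, (v j) ^ 2 := by
          rw [h3, h4]; ring
  calc ‖T v‖ = Real.sqrt (‖T v‖ ^ 2) := (Real.sqrt_sq (norm_nonneg _)).symm
    _ ≤ Real.sqrt (frobNorm T ^ 2 * ‖v‖ ^ 2) := Real.sqrt_le_sqrt hsq
    _ = frobNorm T * ‖v‖ := by
        rw [Real.sqrt_mul (by positivity), Real.sqrt_sq hF0, Real.sqrt_sq (norm_nonneg _)]

private lemma taylor1d (φ φ' φ'' : ℝ → ℝ)
    (h1 : ∀ t, HasDerivAt φ (φ' t) t)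
    (h2 : ∀ t, HasDerivAt φ' (φ'' t) t)
    (K : ℝ) (hK : ∀ t ∈ Set.Icc (0:ℝ) 1, φ'' t ≤ φ'' 0 + K * t) :
    φ 1 ≤ φ 0 + φ' 0 + φ'' 0 / 2 + K / 6 := by
  set ψ' : ℝ → ℝ := fun t => φ' t - φ' 0 - φ'' 0 * t - K * t ^ 2 / 2 with hψ'
  set ψ : ℝ → ℝ := fun t => φ t - φ 0 - φ' 0 * t - φ'' 0 * t ^ 2 / 2 - K * t ^ 3 / 6 with hψ
  have hdψ' : ∀ t, HasDerivAt ψ' (φ'' t - φ'' 0 - K * t) t := by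
    intro t
    have h := (((h2 t).sub_const (φ' 0)).sub ((hasDerivAt_id t).const_mul (φ'' 0))).sub
        (((hasDerivAt_pow 2 t).const_mul K).div_const 2)
    refine h.congr_deriv ?_
    norm_num
    ring
  have hdψ : ∀ t, HasDerivAt ψ (ψ' t) t := by
    intro t
    have h := ((((h1 t).sub_const (φ 0)).sub ((hasDerivAt_id t).const_mul (φ' 0))).sub
        (((hasDerivAt_pow 2 t).const_mul (φ'' 0)).div_const 2)).sub
        (((hasDerivAt_pow 3 t).const_mul K).div_const 6)
    refine h.congr_deriv ?_
    simp [hψ']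
    ring
  have hanti' : AntitoneOn ψ' (Set.Icc 0 1) := by
    apply antitoneOn_of_deriv_nonpos (convex_Icc 0 1)
    · exact fun t _ => (hdψ' t).continuousAt.continuousWithinAt
    · exact fun t _ => (hdψ' t).differentiableAt.differentiableWithinAt
    · intro t ht
      rw [interior_Icc] at ht
      rw [(hdψ' t).deriv]
      have := hK t ⟨ht.1.le, ht.2.le⟩
      linarith
  have hψ'0 : ψ' 0 = 0 := by simp [hψ']
  have hψ'nonpos : ∀ t ∈ Set.Icc (0:ℝ) 1, ψ' t ≤ 0 := by
    intro t ht
    have := hanti' (Set.left_mem_Icc.mpr one_pos.le) ht ht.1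
    rw [hψ'0] at this
    exact this
  have hanti : AntitoneOn ψ (Set.Icc 0 1) := by
    apply antitoneOn_of_deriv_nonpos (convex_Icc 0 1)
    · exact fun t _ => (hdψ t).continuousAt.continuousWithinAt
    · exact fun t _ => (hdψ t).differentiableAt.differentiableWithinAt
    · intro t ht
      rw [interior_Icc] at ht
      rw [(hdψ t).deriv]
      exact hψ'nonpos t ⟨ht.1.le, ht.2.le⟩
  have h10 : ψ 1 ≤ ψ 0 :=
    hanti (Set.left_mem_Icc.mpr one_pos.le) (Set.right_mem_Icc.mpr one_pos.le) one_pos.le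
  simp only [hψ] at h10
  norm_num at h10
  linarith

section taylor
variable {n : ℕ}
local notation "E" => EuclideanSpace ℝ (Fin n)

private lemma grad_inner (f : E → ℝ) (y v : E) :
    ⟪gradient f y, v⟫ = fderiv ℝ f y v := by
  rw [gradient, InnerProductSpace.toDual_symm_apply]

private lemma grad_contDiff (f : E → ℝ) (hf : ContDiff ℝ 2 f) :
    ContDiff ℝ 1 (gradient f) := by
  have h1 : ContDiff ℝ 1 (fun y => fderiv ℝ f y) := hf.fderiv_right (by norm_num)
  exact ((InnerProductSpace.toDual ℝ _).symm.contDiff.comp h1 : _)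

private lemma taylor_cubic (f : E → ℝ) (hf : ContDiff ℝ 2 f) (L : ℝ)
    (hLip : ∀ x y : E, ‖fderiv ℝ (gradient f) y - fderiv ℝ (gradient f) x‖ ≤ L * ‖y - x‖)
    (x s : E) :
    f (x + s) ≤ f x + ⟪gradient f x, s⟫ + 1 / 2 * ⟪fderiv ℝ (gradient f) x s, s⟫
      + L * ‖s‖ ^ 3 / 6 := by
  set H := fun y => fderiv ℝ (gradient f) y with hH
  have hG : ContDiff ℝ 1 (gradient f) := grad_contDiff f hf
  have hGd : Differentiable ℝ (gradient f) := hG.differentiable one_ne_zero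
  have hfd : Differentiable ℝ f := hf.differentiable (by norm_num)
  set c : ℝ → E := fun t => x + t • s with hc
  have hcd : ∀ t : ℝ, HasDerivAt c s t := by
    intro t
    exact (((hasDerivAt_id t).smul_const s).const_add x).congr_deriv (one_smul _ _)
  set φ : ℝ → ℝ := fun t => f (c t) with hφ
  set φ' : ℝ → ℝ := fun t => ⟪gradient f (c t), s⟫ with hφ'
  set φ'' : ℝ → ℝ := fun t => ⟪H (c t) s, s⟫ with hφ''
  have hd1 : ∀ t, HasDerivAt φ (φ' t) t := by
    intro t
    have h := (hfd (c t)).hasFDerivAt.comp_hasDerivAt t (hcd t)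
    have he : φ' t = fderiv ℝ f (c t) s := grad_inner f (c t) s
    rw [he]
    exact h
  have hd2 : ∀ t, HasDerivAt φ' (φ'' t) t := by
    intro t
    have hu : HasDerivAt (fun t => gradient f (c t)) (H (c t) s) t :=
      (hGd (c t)).hasFDerivAt.comp_hasDerivAt t (hcd t)
    have h := HasDerivAt.inner ℝ hu (hasDerivAt_const t s)
    exact h.congr_deriv (by simp [hφ''])
  have hK : ∀ t ∈ Set.Icc (0:ℝ) 1, φ'' t ≤ φ'' 0 + L * ‖s‖ ^ 3 * t := by
    intro t ht
    have hc0 : c 0 = x := by simp [hc]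
    have h1 : φ'' t - φ'' 0 = ⟪(H (c t) - H x) s, s⟫ := by
      simp [hφ'', hc0, ContinuousLinearMap.sub_apply, inner_sub_left]
    have h2 : ⟪(H (c t) - H x) s, s⟫ ≤ ‖(H (c t) - H x) s‖ * ‖s‖ := real_inner_le_norm _ _
    have h3 : ‖(H (c t) - H x) s‖ ≤ ‖H (c t) - H x‖ * ‖s‖ :=
      ContinuousLinearMap.le_opNorm _ _
    have h4 : ‖H (c t) - H x‖ ≤ L * ‖c t - x‖ := hLip x (c t)
    have h5 : ‖c t - x‖ = t * ‖s‖ := by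
      simp [hc, norm_smul, abs_of_nonneg ht.1]
    have h6 : ‖H (c t) - H x‖ ≤ L * (t * ‖s‖) := h5 ▸ h4
    have h7 : ⟪(H (c t) - H x) s, s⟫ ≤ L * ‖s‖ ^ 3 * t := by
      calc ⟪(H (c t) - H x) s, s⟫ ≤ ‖(H (c t) - H x) s‖ * ‖s‖ := h2
        _ ≤ (‖H (c t) - H x‖ * ‖s‖) * ‖s‖ :=
            mul_le_mul_of_nonneg_right h3 (norm_nonneg s)
        _ ≤ ((L * (t * ‖s‖)) * ‖s‖) * ‖s‖ := by
            have := mul_le_mul_of_nonneg_right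
              (mul_le_mul_of_nonneg_right h6 (norm_nonneg s)) (norm_nonneg s)
            exact this
        _ = L * ‖s‖ ^ 3 * t := by ring
    linarith
  have := taylor1d φ φ' φ'' hd1 hd2 (L * ‖s‖ ^ 3) hK
  have hc0 : c 0 = x := by simp [hc]
  have hc1 : c 1 = x + s := by simp [hc]
  rw [hφ, hφ', hφ''] at this
  simp only [hc0, hc1] at this
  linarith

end taylor

theorem inexact_crn_descent (n : ℕ) (f : EuclideanSpace ℝ (Fin n) → ℝ)
    (L : ℝ) (hL : 0 < L) (hf : ContDiff ℝ 2 f)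
    (hLip : ∀ x y : EuclideanSpace ℝ (Fin n),
      ‖fderiv ℝ (gradient f) y - fderiv ℝ (gradient f) x‖ ≤ L * ‖y - x‖)
    (η : ℝ) (hη : 0 < η) (hηL : η < 1 / (2 * L))
    (x g xp : EuclideanSpace ℝ (Fin n))
    (M : EuclideanSpace ℝ (Fin n) →L[ℝ] EuclideanSpace ℝ (Fin n))
    (hM : ∀ u v : EuclideanSpace ℝ (Fin n), ⟪M u, v⟫ = ⟪u, M v⟫)
    (hmin : ∀ x' : EuclideanSpace ℝ (Fin n),
      ⟪g, xp - x⟫ + 1 / 2 * ⟪xp - x, M (xp - x)⟫ + 1 / (6 * η) * ‖xp - x‖ ^ 3 ≤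
      ⟪g, x' - x⟫ + 1 / 2 * ⟪x' - x, M (x' - x)⟫ + 1 / (6 * η) * ‖x' - x‖ ^ 3) :
    f xp ≤ f x - 1 / (9 * η) * ‖xp - x‖ ^ 3 +
      24 * η ^ 2 * frobNorm (fderiv ℝ (gradient f) x - M) ^ 3 +
      3 * η ^ ((1 : ℝ) / 2) * ‖gradient f x - g‖ ^ ((3 : ℝ) / 2) := by
  set s : EuclideanSpace ℝ (Fin n) := xp - x with hs
  set A : ℝ := ⟪g, s⟫ with hA
  set B : ℝ := ⟪s, M s⟫ with hB
  set r : ℝ := ‖s‖ with hr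
  have hr0 : 0 ≤ r := norm_nonneg s
  -- first-order condition along the ray
  have hfoc : A + B + 1 / (2 * η) * r ^ 3 = 0 := by
    set ψ : ℝ → ℝ := fun t => A * t + 1 / 2 * B * t ^ 2 + 1 / (6 * η) * r ^ 3 * t ^ 3 with hψ
    have hψd : ∀ t : ℝ, HasDerivAt ψ
        (A + 1 / 2 * B * (2 * t) + 1 / (6 * η) * r ^ 3 * (3 * t ^ 2)) t := by
      intro t
      have h := (((hasDerivAt_id t).const_mul A).add
        ((hasDerivAt_pow 2 t).const_mul (1 / 2 * B))).add
        ((hasDerivAt_pow 3 t).const_mul (1 / (6 * η) * r ^ 3))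
      refine h.congr_deriv ?_
      norm_num
    have hloc : IsLocalMin ψ 1 := by
      filter_upwards [Ioi_mem_nhds (zero_lt_one (α := ℝ))] with t ht
      have h := hmin (x + t • s)
      have e1 : (x + t • s) - x = t • s := add_sub_cancel_left x _
      rw [e1] at h
      have e2 : ⟪g, t • s⟫ = t * A := real_inner_smul_right g s t
      have e3 : ⟪t • s, M (t • s)⟫ = t * (t * B) := by
        rw [map_smul, real_inner_smul_left, real_inner_smul_right]
      have e4 : ‖t • s‖ = t * r := by
        rw [norm_smul, Real.norm_eq_abs, abs_of_pos ht]
      rw [e2, e3, e4] at h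
      show ψ 1 ≤ ψ t
      simp only [hψ]
      ring_nf
      ring_nf at h
      linarith
    have hder := hloc.deriv_eq_zero
    rw [(hψd 1).deriv] at hder
    rw [show ((1:ℝ)) ^ 2 = 1 by norm_num, mul_one] at hder
    have : A + 1 / 2 * B * 2 + 1 / (6 * η) * r ^ 3 * 3 = A + B + 1 / (2 * η) * r ^ 3 := by
      field_simp
      ring
    linarith [hder, this]
  -- comparison with the reflected point gives A ≤ 0
  have hAle : A ≤ 0 := by
    have h := hmin (x - s)
    have e1 : (x - s) - x = -s := by abel
    rw [e1] at h
    have e2 : ⟪g, -s⟫ = -A := inner_neg_right g s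
    have e3 : ⟪-s, M (-s)⟫ = B := by rw [map_neg, inner_neg_neg]
    have e4 : ‖(-s)‖ = r := norm_neg s
    rw [e2, e3, e4] at h
    linarith
  have hAB : A + 1 / 2 * B ≤ -(1 / (4 * η)) * r ^ 3 := by
    have h1 : 1 / (2 * η) * r ^ 3 / 2 = 1 / (4 * η) * r ^ 3 := by
      ring
    linarith
  -- Taylor expansion with Lipschitz Hessian
  set H := fderiv ℝ (gradient f) x with hH
  have htay : f xp ≤ f x + ⟪gradient f x, s⟫ + 1 / 2 * ⟪H s, s⟫ + L * r ^ 3 / 6 := by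
    have h := taylor_cubic f hf L hLip x s
    rw [show x + s = xp by rw [hs]; abel] at h
    exact h
  -- decompositions
  have hdec1 : ⟪gradient f x, s⟫ = A + ⟪gradient f x - g, s⟫ := by
    rw [inner_sub_left]
    ring
  have hdec2 : ⟪H s, s⟫ = ⟪(H - M) s, s⟫ + B := by
    rw [ContinuousLinearMap.sub_apply, inner_sub_left, hB, real_inner_comm (M s) s]
    ring
  -- bounds
  set d : ℝ := ‖gradient f x - g‖ with hd
  set F : ℝ := frobNorm (H - M) with hF
  have hF0 : 0 ≤ F := Real.sqrt_nonneg _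
  have hb1 : ⟪gradient f x - g, s⟫ ≤ d * r := real_inner_le_norm _ _
  have hy1 : d * r ≤ 1 / (36 * η) * r ^ 3 + 3 * η ^ ((1:ℝ)/2) * d ^ ((3:ℝ)/2) :=
    young1 d r η (norm_nonneg _) hr0 hη
  have hb2 : ⟪(H - M) s, s⟫ ≤ F * r ^ 2 := by
    calc ⟪(H - M) s, s⟫ ≤ ‖(H - M) s‖ * r := real_inner_le_norm _ _
      _ ≤ (F * r) * r := mul_le_mul_of_nonneg_right (frob_bound (H - M) s) hr0
      _ = F * r ^ 2 := by ring
  have hy2 : 1 / 2 * (F * r ^ 2) ≤ 1 / (36 * η) * r ^ 3 + 24 * η ^ 2 * F ^ 3 :=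
    young2 F r η hF0 hr0 hη
  have hLb : L * r ^ 3 / 6 ≤ 1 / (12 * η) * r ^ 3 := by
    have h2L : η * (2 * L) < 1 := (lt_div_iff₀ (by positivity)).mp hηL
    have hL2 : L ≤ 1 / (2 * η) := by
      rw [le_div_iff₀ (by positivity)]
      nlinarith
    have := mul_le_mul_of_nonneg_right hL2 (pow_nonneg hr0 3)
    have heq : 1 / (2 * η) * r ^ 3 / 6 = 1 / (12 * η) * r ^ 3 := by
      ring
    linarith
  have hcomb : -(1 / (4 * η)) * r ^ 3 + 1 / (36 * η) * r ^ 3 + 1 / (36 * η) * r ^ 3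
      + 1 / (12 * η) * r ^ 3 = -(1 / (9 * η)) * r ^ 3 := by
    ring
  rw [hdec1, hdec2] at htay
  linarith
end
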